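/- arXiv:2209.06403 — 6 statements merged into one kernel-verified Lean document; each statement's English description precedes it below -/
import Mathlib

section
/- Let T be a Lie triple system, V a vector space, and θ ∈ Z³(T,V) a cocycle. Then the annihilator of the extension T_θ = T ⊕ V equals (Rad(θ) ∩ Ann(T)) ⊕ V, where Rad(θ) = {x ∈ T : θ(x,T,T) = 0}. -/
structure LTS (F : Type*) [Field F] (T : Type*) [AddCommGroup T] [Module F T] where
  br : T → T → T → T
  add₁ : ∀ a b y z, br (a + b) y z = br a y z + br b y z
  smul₁ : ∀ (c : F) (a y z : T), br (c • a) y z = c • br a y z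
  add₂ : ∀ x a b z, br x (a + b) z = br x a z + br x b z
  smul₂ : ∀ (c : F) (x a z : T), br x (c • a) z = c • br x a z
  add₃ : ∀ x y a b, br x y (a + b) = br x y a + br x y b
  smul₃ : ∀ (c : F) (x y a : T), br x y (c • a) = c • br x y a
  A1 : ∀ x y z, br x y z + br y x z = 0
  A2 : ∀ x y z, br x y z + br y z x + br z x y = 0
  A3 : ∀ u v x y z, br u v (br x y z) = br (br u v x) y z + br x (br u v y) z + br x y (br u v z)

/-- A trilinear map between modules. -/
def Trilinear (F : Type*) [Field F] {T V : Type*} [AddCommGroup T] [Module F T]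
    [AddCommGroup V] [Module F V] (θ : T → T → T → V) : Prop :=
  (∀ a b y z, θ (a + b) y z = θ a y z + θ b y z) ∧
  (∀ (c : F) (a y z : T), θ (c • a) y z = c • θ a y z) ∧
  (∀ x a b z, θ x (a + b) z = θ x a z + θ x b z) ∧
  (∀ (c : F) (x a z : T), θ x (c • a) z = c • θ x a z) ∧
  (∀ x y a b, θ x y (a + b) = θ x y a + θ x y b) ∧
  (∀ (c : F) (x y a : T), θ x y (c • a) = c • θ x y a)

/-- A cocycle: a trilinear map satisfying (B1)–(B3). -/
def IsCocycle (F : Type*) [Field F] {T V : Type*} [AddCommGroup T] [Module F T]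
    [AddCommGroup V] [Module F V] (L : LTS F T) (θ : T → T → T → V) : Prop :=
  Trilinear F θ ∧
  (∀ x y z, θ x y z + θ y x z = 0) ∧
  (∀ x y z, θ x y z + θ y z x + θ z x y = 0) ∧
  (∀ u v x y z,
    θ u v (L.br x y z) + θ (L.br v u x) y z + θ x (L.br v u y) z + θ x y (L.br v u z) = 0)

/-- The bracket of the annihilator extension `T ⊕ V`. -/
def extBr (F : Type*) [Field F] {T V : Type*} [AddCommGroup T] [Module F T]
    [AddCommGroup V] [Module F V] (L : LTS F T) (θ : T → T → T → V) :
    T × V → T × V → T × V → T × V :=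
  fun p q r => (L.br p.1 q.1 r.1, θ p.1 q.1 r.1)

/-- The annihilator of a Lie triple system, as a set. -/
def AnnSet (F : Type*) [Field F] {T : Type*} [AddCommGroup T] [Module F T]
    (L : LTS F T) : Set T :=
  {x | ∀ y z, L.br x y z = 0}

/-- The radical of a trilinear map. -/
def RadSet (F : Type*) [Field F] {T V : Type*} [AddCommGroup T] [Module F T]
    [AddCommGroup V] [Module F V] (θ : T → T → T → V) : Set T :=
  {x | ∀ y z, θ x y z = 0}

/-- The lower central series `T⁽⁰⁾ = T`, `T⁽ⁿ⁺¹⁾ = [T⁽ⁿ⁾, T, T]`. -/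
def derSeq (F : Type*) [Field F] {T : Type*} [AddCommGroup T] [Module F T]
    (L : LTS F T) : ℕ → Submodule F T
  | 0 => ⊤
  | n + 1 => Submodule.span F {w | ∃ a ∈ derSeq F L n, ∃ y z : T, w = L.br a y z}

/-- A Lie triple system is nilpotent if its lower central series terminates. -/
def IsNilpotentLTS (F : Type*) [Field F] {T : Type*} [AddCommGroup T] [Module F T]
    (L : LTS F T) : Prop :=
  ∃ m, derSeq F L m = ⊥

/-- Isomorphism of Lie triple systems. -/
def LTSIso (F : Type*) [Field F] {T₁ T₂ : Type*} [AddCommGroup T₁] [Module F T₁]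
    [AddCommGroup T₂] [Module F T₂] (L₁ : LTS F T₁) (L₂ : LTS F T₂) : Prop :=
  ∃ e : T₁ ≃ₗ[F] T₂, ∀ x y z, e (L₁.br x y z) = L₂.br (e x) (e y) (e z)

/-- A coboundary: a map of the form `δf(x,y,z) = f([x,y,z])`. -/
def IsCoboundary (F : Type*) [Field F] {T V : Type*} [AddCommGroup T] [Module F T]
    [AddCommGroup V] [Module F V] (L : LTS F T) (θ : T → T → T → V) : Prop :=
  ∃ f : T →ₗ[F] V, ∀ x y z, θ x y z = f (L.br x y z)

theorem stmt1_general {F : Type*} [Field F] {T V : Type*} [AddCommGroup T] [Module F T]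
    [AddCommGroup V] [Module F V] (L : LTS F T) (θ : T → T → T → V)
    (E : LTS F (T × V)) (hE : E.br = extBr F L θ) :
    AnnSet F E = {p : T × V | p.1 ∈ RadSet F θ ∩ AnnSet F L} := by
  ext p
  simp only [AnnSet, RadSet, Set.mem_ofPred_eq, Set.mem_inter_iff, hE, extBr, Prod.mk_eq_zero]
  constructor
  · intro hp
    exact ⟨fun y z => (hp (y, 0) (z, 0)).2, fun y z => (hp (y, 0) (z, 0)).1⟩
  · rintro ⟨hrad, hann⟩ q r
    exact ⟨hann q.1 r.1, hrad q.1 r.1⟩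

theorem stmt1 {F : Type*} [Field F] {T V : Type*} [AddCommGroup T] [Module F T]
    [AddCommGroup V] [Module F V] (L : LTS F T) (θ : T → T → T → V)
    (hθ : IsCocycle F L θ) (E : LTS F (T × V)) (hE : E.br = extBr F L θ) :
    AnnSet F E = {p : T × V | p.1 ∈ RadSet F θ ∩ AnnSet F L} :=
  stmt1_general L θ E hE
end

section
/- Let T be a Lie triple system, V a vector space, and θ ∈ Z³(T,V). The extension T_θ is nilpotent if and only if T is nilpotent. -/
/-!
The projection `T_θ → T` is a surjective homomorphism, so it maps the lower central series of
`T_θ` onto that of `T`; and its kernel `V` lies in the annihilator of `T_θ`. Hence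
`T_θ⁽ᵐ⁾ = 0` gives `T⁽ᵐ⁾ = 0`, while `T⁽ᵐ⁾ = 0` puts `T_θ⁽ᵐ⁾` inside `V`, so `T_θ⁽ᵐ⁺¹⁾ = 0`.
-/

theorem LTS.br_zero_left {F T : Type*} [Field F] [AddCommGroup T] [Module F T] (L : LTS F T)
    (y z : T) : L.br 0 y z = 0 := by
  simpa using (L.add₁ 0 0 y z).symm

section LowerCentralSeries

variable {F : Type*} [Field F] {T₁ T₂ : Type*} [AddCommGroup T₁] [Module F T₁]
  [AddCommGroup T₂] [Module F T₂]

theorem derSeq_succ (L : LTS F T₁) (n : ℕ) :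
    derSeq F L (n + 1) = Submodule.span F {w | ∃ a ∈ derSeq F L n, ∃ y z : T₁, w = L.br a y z} :=
  rfl

theorem derSeq_succ_eq_bot_of_le_annSet (L : LTS F T₁) {n : ℕ}
    (h : (derSeq F L n : Set T₁) ⊆ AnnSet F L) : derSeq F L (n + 1) = ⊥ := by
  rw [derSeq_succ, eq_bot_iff, Submodule.span_le]
  rintro _ ⟨a, ha, y, z, rfl⟩
  exact h ha y z

theorem map_derSeq_of_surjective (L₁ : LTS F T₁) (L₂ : LTS F T₂) (f : T₁ →ₗ[F] T₂)
    (hf : Function.Surjective f) (hbr : ∀ x y z, f (L₁.br x y z) = L₂.br (f x) (f y) (f z))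
    (n : ℕ) : (derSeq F L₁ n).map f = derSeq F L₂ n := by
  induction n with
  | zero => exact Submodule.map_top f ▸ LinearMap.range_eq_top.mpr hf
  | succ n ih =>
    rw [derSeq_succ, derSeq_succ, Submodule.map_span, ← ih]
    congr 1
    ext w
    constructor
    · rintro ⟨_, ⟨a, ha, y, z, rfl⟩, rfl⟩
      exact ⟨f a, ⟨a, ha, rfl⟩, f y, f z, hbr a y z⟩
    · rintro ⟨_, ⟨a, ha, rfl⟩, y, z, rfl⟩
      obtain ⟨y, rfl⟩ := hf y
      obtain ⟨z, rfl⟩ := hf z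
      exact ⟨L₁.br a y z, ⟨a, ha, y, z, rfl⟩, hbr a y z⟩

theorem isNilpotentLTS_iff_of_surjective_of_ker_le_annSet (L₁ : LTS F T₁) (L₂ : LTS F T₂)
    (f : T₁ →ₗ[F] T₂) (hf : Function.Surjective f)
    (hbr : ∀ x y z, f (L₁.br x y z) = L₂.br (f x) (f y) (f z))
    (hker : (LinearMap.ker f : Set T₁) ⊆ AnnSet F L₁) :
    IsNilpotentLTS F L₁ ↔ IsNilpotentLTS F L₂ := by
  have hmap := map_derSeq_of_surjective L₁ L₂ f hf hbr
  constructor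
  · rintro ⟨m, hm⟩
    exact ⟨m, by rw [← hmap, hm, Submodule.map_bot]⟩
  · rintro ⟨m, hm⟩
    refine ⟨m + 1, derSeq_succ_eq_bot_of_le_annSet L₁ (subset_trans ?_ hker)⟩
    rw [SetLike.coe_subset_coe, LinearMap.le_ker_iff_map, hmap, hm]

end LowerCentralSeries

theorem stmt2_general {F : Type*} [Field F] {T V : Type*} [AddCommGroup T] [Module F T]
    [AddCommGroup V] [Module F V] (L : LTS F T) (θ : T → T → T → V)
    (E : LTS F (T × V)) (hE : E.br = extBr F L θ) :
    IsNilpotentLTS F E ↔ IsNilpotentLTS F L := by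
  refine isNilpotentLTS_iff_of_surjective_of_ker_le_annSet E L (LinearMap.fst F T V)
    LinearMap.fst_surjective (fun x y z => by simp [hE, extBr]) ?_
  rintro ⟨_, v⟩ rfl y z
  calc E.br (0, v) y z = E.br 0 y z := by simp [hE, extBr]
    _ = 0 := E.br_zero_left y z

theorem stmt2 {F : Type*} [Field F] {T V : Type*} [AddCommGroup T] [Module F T]
    [AddCommGroup V] [Module F V] (L : LTS F T) (θ : T → T → T → V)
    (hθ : IsCocycle F L θ) (E : LTS F (T × V)) (hE : E.br = extBr F L θ) :
    IsNilpotentLTS F E ↔ IsNilpotentLTS F L :=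
  stmt2_general L θ E hE
end

section
/- Let T be an n-dimensional Lie triple system with dim Ann(T) = m ≠ 0. Then there exists an (n−m)-dimensional Lie triple system T′ and a cocycle θ ∈ Z³(T′, Ann(T)) with Rad(θ) ∩ Ann(T′) = 0 such that T ≅ T′_θ and T / Ann(T) ≅ T′. -/
/-- The annihilator of a Lie triple system, as a submodule. -/
def AnnSub (F : Type*) [Field F] {T : Type*} [AddCommGroup T] [Module F T]
    (L : LTS F T) : Submodule F T where
  carrier := {x | ∀ y z, L.br x y z = 0}
  add_mem' := by
    intro a b ha hb y z
    rw [L.add₁, ha, hb, add_zero]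
  zero_mem' := by
    intro y z
    have h := L.smul₁ (0 : F) 0 y z
    simpa using h
  smul_mem' := by
    intro c a ha y z
    rw [L.smul₁, ha, smul_zero]

/-! Split `T = W ⊕ Ann(T)` linearly and transport the bracket of `T` to `U × Ann(T)`, where
`U ≅ W` is the coordinate space. In the transported system `0 × Ann(T)` is exactly the annihilator,
and an annihilator element kills every slot of the bracket, so the bracket only sees first
coordinates: it is `extBr L' θ` for the bracket `L'` it induces on `U` and the `Ann(T)`-component
`θ`. The axioms of `L'` and the cocycle identities of `θ` are the two coordinates of the axioms of
the transported system. Finally, `x ∈ Rad θ ∩ Ann L'` makes `(x, 0)` annihilating, hence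
`x = 0`. -/

namespace LTS

variable {F : Type*} [Field F]

section Basic

variable {T : Type*} [AddCommGroup T] [Module F T] (L : LTS F T)

lemma br_mid_eq_zero_of_mem_annSub {a : T} (ha : a ∈ AnnSub F L) (y z : T) :
    L.br y a z = 0 := by
  simpa [ha y z] using L.A1 a y z

lemma br_right_eq_zero_of_mem_annSub {a : T} (ha : a ∈ AnnSub F L) (y z : T) :
    L.br y z a = 0 := by
  simpa [ha y z, L.br_mid_eq_zero_of_mem_annSub ha z y] using L.A2 y z a

lemma br_br_add_br_swap_eq_zero (u v x y z : T) :
    L.br u v (L.br x y z) + L.br (L.br v u x) y z + L.br x (L.br v u y) z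
      + L.br x y (L.br v u z) = 0 := by
  rw [add_assoc, add_assoc, ← add_assoc (L.br (L.br v u x) y z), ← L.A3]
  exact L.A1 u v _

end Basic

section Transport

variable {T T' : Type*} [AddCommGroup T] [Module F T] [AddCommGroup T'] [Module F T']

def transport (L : LTS F T) (φ : T ≃ₗ[F] T') : LTS F T' where
  br x y z := φ (L.br (φ.symm x) (φ.symm y) (φ.symm z))
  add₁ a b y z := by rw [map_add, L.add₁, map_add]
  smul₁ c a y z := by rw [map_smul, L.smul₁, map_smul]
  add₂ x a b z := by rw [map_add, L.add₂, map_add]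
  smul₂ c x a z := by rw [map_smul, L.smul₂, map_smul]
  add₃ x y a b := by rw [map_add, L.add₃, map_add]
  smul₃ c x y a := by rw [map_smul, L.smul₃, map_smul]
  A1 x y z := by rw [← map_add, L.A1, map_zero]
  A2 x y z := by rw [← map_add, ← map_add, L.A2, map_zero]
  A3 u v x y z := by simp only [LinearEquiv.symm_apply_apply]; rw [L.A3, map_add, map_add]

lemma ltsIso_transport (L : LTS F T) (φ : T ≃ₗ[F] T') : LTSIso F L (L.transport φ) :=
  ⟨φ, fun x y z => by simp only [transport, LinearEquiv.symm_apply_apply]⟩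

lemma mem_annSub_transport (L : LTS F T) (φ : T ≃ₗ[F] T') {p : T'} :
    p ∈ AnnSub F (L.transport φ) ↔ φ.symm p ∈ AnnSub F L := by
  refine ⟨fun hp y z => ?_, fun hp y z => ?_⟩
  · simpa [transport] using hp (φ y) (φ z)
  · simp [transport, hp _ _]

end Transport

section Extension

variable {U V : Type*} [AddCommGroup U] [Module F U] [AddCommGroup V] [Module F V]

lemma isCocycle_of_br_eq_extBr {E : LTS F (U × V)} {L' : LTS F U} {θ : U → U → U → V}
    (h : E.br = extBr F L' θ) : IsCocycle F L' θ := by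
  refine ⟨⟨fun a b y z => ?_, fun c a y z => ?_, fun x a b z => ?_, fun c x a z => ?_,
    fun x y a b => ?_, fun c x y a => ?_⟩, fun x y z => ?_, fun x y z => ?_,
    fun u v x y z => ?_⟩
  · simpa [h, extBr] using congrArg Prod.snd (E.add₁ (a, 0) (b, 0) (y, 0) (z, 0))
  · simpa [h, extBr] using congrArg Prod.snd (E.smul₁ c (a, 0) (y, 0) (z, 0))
  · simpa [h, extBr] using congrArg Prod.snd (E.add₂ (x, 0) (a, 0) (b, 0) (z, 0))
  · simpa [h, extBr] using congrArg Prod.snd (E.smul₂ c (x, 0) (a, 0) (z, 0))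
  · simpa [h, extBr] using congrArg Prod.snd (E.add₃ (x, 0) (y, 0) (a, 0) (b, 0))
  · simpa [h, extBr] using congrArg Prod.snd (E.smul₃ c (x, 0) (y, 0) (a, 0))
  · simpa [h, extBr] using congrArg Prod.snd (E.A1 (x, 0) (y, 0) (z, 0))
  · simpa [h, extBr] using congrArg Prod.snd (E.A2 (x, 0) (y, 0) (z, 0))
  · simpa [h, extBr] using
      congrArg Prod.snd (E.br_br_add_br_swap_eq_zero (u, 0) (v, 0) (x, 0) (y, 0) (z, 0))

def cocycleOfProd (E : LTS F (U × V)) (a b c : U) : V := (E.br (a, 0) (b, 0) (c, 0)).2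

section ProdWithCentralFactor

variable (E : LTS F (U × V)) (hE : ∀ v : V, ((0 : U), v) ∈ AnnSub F E)
include hE

lemma br_mk_fst_left (p q r : U × V) : E.br (p.1, 0) q r = E.br p q r := by
  conv_rhs => rw [show p = (p.1, 0) + (0, p.2) by simp, E.add₁, hE p.2 q r, add_zero]

lemma br_mk_fst_mid (p q r : U × V) : E.br p (q.1, 0) r = E.br p q r := by
  conv_rhs => rw [show q = (q.1, 0) + (0, q.2) by simp, E.add₂,
    E.br_mid_eq_zero_of_mem_annSub (hE q.2) p r, add_zero]

lemma br_mk_fst_right (p q r : U × V) : E.br p q (r.1, 0) = E.br p q r := by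
  conv_rhs => rw [show r = (r.1, 0) + (0, r.2) by simp, E.add₃,
    E.br_right_eq_zero_of_mem_annSub (hE r.2) p q, add_zero]

def baseOfProd : LTS F U where
  br a b c := (E.br (a, 0) (b, 0) (c, 0)).1
  add₁ a b y z := by simpa using congrArg Prod.fst (E.add₁ (a, 0) (b, 0) (y, 0) (z, 0))
  smul₁ c a y z := by simpa using congrArg Prod.fst (E.smul₁ c (a, 0) (y, 0) (z, 0))
  add₂ x a b z := by simpa using congrArg Prod.fst (E.add₂ (x, 0) (a, 0) (b, 0) (z, 0))
  smul₂ c x a z := by simpa using congrArg Prod.fst (E.smul₂ c (x, 0) (a, 0) (z, 0))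
  add₃ x y a b := by simpa using congrArg Prod.fst (E.add₃ (x, 0) (y, 0) (a, 0) (b, 0))
  smul₃ c x y a := by simpa using congrArg Prod.fst (E.smul₃ c (x, 0) (y, 0) (a, 0))
  A1 x y z := by simpa using congrArg Prod.fst (E.A1 (x, 0) (y, 0) (z, 0))
  A2 x y z := by simpa using congrArg Prod.fst (E.A2 (x, 0) (y, 0) (z, 0))
  A3 u v x y z := by
    simpa [E.br_mk_fst_left hE, E.br_mk_fst_mid hE, E.br_mk_fst_right hE] using
      congrArg Prod.fst (E.A3 (u, 0) (v, 0) (x, 0) (y, 0) (z, 0))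

lemma br_eq_extBr_baseOfProd : E.br = extBr F (E.baseOfProd hE) E.cocycleOfProd := by
  ext p q r <;>
  simp only [extBr, baseOfProd, cocycleOfProd, E.br_mk_fst_left hE, E.br_mk_fst_mid hE,
    E.br_mk_fst_right hE]

end ProdWithCentralFactor

lemma radSet_inter_annSet_eq_singleton_zero {E : LTS F (U × V)} {L' : LTS F U} {θ : U → U → U → V}
    (h : E.br = extBr F L' θ) (hE : ∀ p ∈ AnnSub F E, p.1 = 0) :
    RadSet F θ ∩ AnnSet F L' = {0} := by
  ext x
  refine ⟨fun ⟨hrad, hann⟩ => hE (x, 0) fun q r => ?_, ?_⟩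
  · simp [h, extBr, hrad q.1 r.1, hann q.1 r.1]
  · rintro rfl
    have h0 (y z : U) : E.br 0 (y, 0) (z, 0) = 0 := (AnnSub F E).zero_mem _ _
    simp only [h, extBr, Prod.fst_zero, Prod.mk_eq_zero] at h0
    exact ⟨fun y z => (h0 y z).2, fun y z => (h0 y z).1⟩

end Extension

end LTS

lemma Submodule.exists_linearEquiv_fin_prod {F T : Type*} [Field F] [AddCommGroup T]
    [Module F T] [FiniteDimensional F T] (A : Submodule F T) :
    ∃ φ : T ≃ₗ[F] (Fin (Module.finrank F T - Module.finrank F A) → F) × A,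
      ∀ x, (φ x).1 = 0 ↔ x ∈ A := by
  obtain ⟨W, hc⟩ := A.exists_isCompl
  have hW : Module.finrank F W = Module.finrank F (Fin (Module.finrank F T -
      Module.finrank F A) → F) := by
    have := Submodule.finrank_add_eq_of_isCompl hc
    rw [Module.finrank_fin_fun]
    omega
  let e := LinearEquiv.ofFinrankEq W _ hW
  refine ⟨(W.prodEquivOfIsCompl A hc.symm).symm ≪≫ₗ e.prodCongr (LinearEquiv.refl F A),
    fun x => ?_⟩
  simp

theorem stmt3_general {F : Type*} [Field F] {T : Type*} [AddCommGroup T] [Module F T]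
    [FiniteDimensional F T] (L : LTS F T) (n m : ℕ)
    (hn : Module.finrank F T = n) (hm : Module.finrank F (AnnSub F L) = m) :
    ∃ (L' : LTS F (Fin (n - m) → F))
      (θ : (Fin (n - m) → F) → (Fin (n - m) → F) → (Fin (n - m) → F) → AnnSub F L),
      IsCocycle F L' θ ∧
      RadSet F θ ∩ AnnSet F L' = {0} ∧
      (∃ E : LTS F ((Fin (n - m) → F) × AnnSub F L),
        E.br = extBr F L' θ ∧ LTSIso F L E) ∧
      (∃ π : T →ₗ[F] (Fin (n - m) → F), Function.Surjective π ∧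
        (∀ x y z, π (L.br x y z) = L'.br (π x) (π y) (π z)) ∧
        LinearMap.ker π = AnnSub F L) := by
  subst hn hm
  obtain ⟨φ, hφ⟩ := (AnnSub F L).exists_linearEquiv_fin_prod
  set E := L.transport φ
  have hAnnE (p) : p ∈ AnnSub F E ↔ p.1 = 0 := by
    rw [LTS.mem_annSub_transport, ← hφ, LinearEquiv.apply_symm_apply]
  have hE (v) : (0, v) ∈ AnnSub F E := (hAnnE _).2 rfl
  have hbr := E.br_eq_extBr_baseOfProd hE
  refine ⟨E.baseOfProd hE, E.cocycleOfProd, LTS.isCocycle_of_br_eq_extBr hbr,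
    LTS.radSet_inter_annSet_eq_singleton_zero hbr fun p => (hAnnE p).1,
    ⟨E, hbr, L.ltsIso_transport φ⟩, LinearMap.fst F _ _ ∘ₗ φ.toLinearMap, ?_, ?_, ?_⟩
  · exact fun u => ⟨φ.symm (u, 0), by simp⟩
  · intro x y z
    simpa [E, LTS.transport, extBr] using congrArg Prod.fst (congr_fun₃ hbr (φ x) (φ y) (φ z))
  · ext x
    simp [hφ]

theorem stmt3 {F : Type*} [Field F] {T : Type*} [AddCommGroup T] [Module F T]
    [FiniteDimensional F T] (L : LTS F T) (n m : ℕ)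
    (hn : Module.finrank F T = n) (hm : Module.finrank F (AnnSub F L) = m) (hm0 : m ≠ 0) :
    ∃ (L' : LTS F (Fin (n - m) → F))
      (θ : (Fin (n - m) → F) → (Fin (n - m) → F) → (Fin (n - m) → F) → AnnSub F L),
      IsCocycle F L' θ ∧
      RadSet F θ ∩ AnnSet F L' = {0} ∧
      (∃ E : LTS F ((Fin (n - m) → F) × AnnSub F L),
        E.br = extBr F L' θ ∧ LTSIso F L E) ∧
      (∃ π : T →ₗ[F] (Fin (n - m) → F), Function.Surjective π ∧
        (∀ x y z, π (L.br x y z) = L'.br (π x) (π y) (π z)) ∧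
        LinearMap.ker π = AnnSub F L) :=
  stmt3_general L n m hn hm
end

section
/- Let T be a Lie triple system, V a vector space, and θ, ϑ ∈ Z³(T,V). If there exist φ ∈ Aut(T) and ψ ∈ GL(V) with [φθ] = [ψϑ] in H³(T,V), then T_θ ≅ T_ϑ. -/
/-! The shear `(x, v) ↦ (φ x, ψ v + f x)` of `T ⊕ V` absorbs the coboundary `f ∘ [·,·,·]`
separating `φθ` from `ψϑ`, so it carries the bracket of `T_ϑ` to that of `T_θ`; its inverse is
the required isomorphism `T_θ ≅ T_ϑ`. -/

section

variable {F T₁ T₂ V₁ V₂ : Type*} [Field F] [AddCommGroup T₁] [Module F T₁] [AddCommGroup T₂]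
  [Module F T₂] [AddCommGroup V₁] [Module F V₁] [AddCommGroup V₂] [Module F V₂]
  {L₁ : LTS F T₁} {L₂ : LTS F T₂} {ϑ : T₁ → T₁ → T₁ → V₁} {θ : T₂ → T₂ → T₂ → V₂}

theorem LTSIso.symm (h : LTSIso F L₁ L₂) : LTSIso F L₂ L₁ := by
  obtain ⟨e, he⟩ := h
  refine ⟨e.symm, fun x y z => e.injective ?_⟩
  simp [he]

theorem skewProd_extBr {φ : T₁ ≃ₗ[F] T₂}
    (hφ : ∀ x y z, φ (L₁.br x y z) = L₂.br (φ x) (φ y) (φ z))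
    (ψ : V₁ ≃ₗ[F] V₂) {f : T₁ →ₗ[F] V₂}
    (hf : ∀ x y z, θ (φ x) (φ y) (φ z) - ψ (ϑ x y z) = f (L₁.br x y z)) (p q r : T₁ × V₁) :
    φ.skewProd ψ f (extBr F L₁ ϑ p q r) =
      extBr F L₂ θ (φ.skewProd ψ f p) (φ.skewProd ψ f q) (φ.skewProd ψ f r) := by
  simp only [extBr, LinearEquiv.skewProd_apply, hφ, ← hf, add_sub_cancel]

theorem ltsIso_ext_of_isCoboundary {φ : T₁ ≃ₗ[F] T₂}
    (hφ : ∀ x y z, φ (L₁.br x y z) = L₂.br (φ x) (φ y) (φ z)) (ψ : V₁ ≃ₗ[F] V₂)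
    (hcls : IsCoboundary F L₁ (fun x y z => θ (φ x) (φ y) (φ z) - ψ (ϑ x y z)))
    {E₁ : LTS F (T₁ × V₁)} {E₂ : LTS F (T₂ × V₂)} (h₁ : E₁.br = extBr F L₁ ϑ)
    (h₂ : E₂.br = extBr F L₂ θ) : LTSIso F E₁ E₂ := by
  obtain ⟨f, hf⟩ := hcls
  refine ⟨φ.skewProd ψ f, fun p q r => ?_⟩
  rw [h₁, h₂]
  exact skewProd_extBr hφ ψ hf p q r

end

theorem stmt10_general {F : Type*} [Field F] {T V : Type*} [AddCommGroup T] [Module F T]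
    [AddCommGroup V] [Module F V] (L : LTS F T) (θ ϑ : T → T → T → V)
    (φ : T ≃ₗ[F] T) (hφ : ∀ x y z, φ (L.br x y z) = L.br (φ x) (φ y) (φ z))
    (ψ : V ≃ₗ[F] V)
    (hcls : IsCoboundary F L (fun x y z => θ (φ x) (φ y) (φ z) - ψ (ϑ x y z)))
    (Eθ Eϑ : LTS F (T × V)) (h1 : Eθ.br = extBr F L θ) (h2 : Eϑ.br = extBr F L ϑ) :
    LTSIso F Eθ Eϑ :=
  (ltsIso_ext_of_isCoboundary hφ ψ hcls h2 h1).symm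

theorem stmt10 {F : Type*} [Field F] {T V : Type*} [AddCommGroup T] [Module F T]
    [AddCommGroup V] [Module F V] (L : LTS F T) (θ ϑ : T → T → T → V)
    (hθ : IsCocycle F L θ) (hϑ : IsCocycle F L ϑ)
    (φ : T ≃ₗ[F] T) (hφ : ∀ x y z, φ (L.br x y z) = L.br (φ x) (φ y) (φ z))
    (ψ : V ≃ₗ[F] V)
    (hcls : IsCoboundary F L (fun x y z => θ (φ x) (φ y) (φ z) - ψ (ϑ x y z)))
    (Eθ Eϑ : LTS F (T × V)) (h1 : Eθ.br = extBr F L θ) (h2 : Eϑ.br = extBr F L ϑ) :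
    LTSIso F Eθ Eϑ :=
  stmt10_general L θ ϑ φ hφ ψ hcls Eθ Eϑ h1 h2
end

section
/- Every nilpotent Lie triple system of dimension at most 2 over a field of characteristic ≠ 2 is abelian (i.e., its triple product is identically zero). -/
/-!
A nilpotent series strictly decreases in dimension until it vanishes, so in dimension at most 2
we get `T⁽²⁾ = 0`: the subspace `T⁽¹⁾` annihilates `T`. If `T⁽¹⁾ ≠ 0`, then `T = F v + T⁽¹⁾` for
a single vector `v`, and a product that is alternating in its first two slots (here `2 ≠ 0` is
used) and killed by `T⁽¹⁾` in those slots must vanish on such a space.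
-/

namespace LTS

variable {F : Type*} [Field F] {T : Type*} [AddCommGroup T] [Module F T] (L : LTS F T)

theorem br_self (h2 : (2 : F) ≠ 0) (u z : T) : L.br u u z = 0 := by
  have h : (2 : F) • L.br u u z = 0 := by rw [two_smul]; exact L.A1 u u z
  exact (smul_eq_zero.mp h).resolve_left h2

/-- Expanding `[a v + w₁, b v + w₂, z]` leaves only `a b [v, v, z] = 0`, because `(A1)` moves
`w₂` into the first slot. -/
theorem br_eq_zero_of_span_sup_eq_top (h2 : (2 : F) ≠ 0) {W : Submodule F T}
    (hW : ∀ w ∈ W, ∀ y z, L.br w y z = 0) {v : T} (hv : F ∙ v ⊔ W = ⊤) (x y z : T) :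
    L.br x y z = 0 := by
  have hdecomp : ∀ t : T, ∃ c : F, ∃ w ∈ W, t = c • v + w := fun t => by
    obtain ⟨s, hs, w, hw, rfl⟩ := Submodule.mem_sup.mp (hv ▸ Submodule.mem_top : t ∈ F ∙ v ⊔ W)
    obtain ⟨c, rfl⟩ := Submodule.mem_span_singleton.mp hs
    exact ⟨c, w, hw, rfl⟩
  obtain ⟨a, w₁, hw₁, rfl⟩ := hdecomp x
  obtain ⟨b, w₂, hw₂, rfl⟩ := hdecomp y
  have hvw₂ : L.br v w₂ z = 0 := by
    rw [← neg_eq_zero, ← eq_neg_iff_add_eq_zero.mpr (L.A1 w₂ v z), hW w₂ hw₂]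
  rw [L.add₁, L.smul₁, hW w₁ hw₁, L.add₂, L.smul₂, L.br_self h2, hvw₂]
  simp

end LTS

theorem Submodule.exists_span_singleton_sup_eq_top_of_finrank_quotient_le_one
    {F : Type*} [Field F] {T : Type*} [AddCommGroup T] [Module F T] [FiniteDimensional F T]
    (W : Submodule F T) (hW : Module.finrank F (T ⧸ W) ≤ 1) : ∃ v : T, F ∙ v ⊔ W = ⊤ := by
  obtain ⟨q, hq⟩ := finrank_le_one_iff.mp hW
  obtain ⟨v, rfl⟩ := W.mkQ_surjective q
  refine ⟨v, eq_top_iff.mpr fun t _ => ?_⟩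
  obtain ⟨c, hc⟩ := hq (W.mkQ t)
  have hdiff : t - c • v ∈ W := by
    rw [← Submodule.Quotient.eq]
    exact hc.symm.trans (map_smul W.mkQ c v).symm
  simpa using
    Submodule.add_mem_sup (Submodule.smul_mem _ c (Submodule.mem_span_singleton_self v)) hdiff

section LowerCentralSeries

variable {F : Type*} [Field F] {T : Type*} [AddCommGroup T] [Module F T] (L : LTS F T)

theorem derSeq_succ_eq_bot_iff (n : ℕ) :
    derSeq F L (n + 1) = ⊥ ↔ ∀ a ∈ derSeq F L n, ∀ y z, L.br a y z = 0 := by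
  simp only [derSeq, Submodule.span_eq_bot, Set.mem_ofPred_eq, forall_exists_index, and_imp]
  exact ⟨fun h a ha y z => h _ a ha y z rfl, fun h _ a ha y z hw => hw ▸ h a ha y z⟩

theorem derSeq_antitone : Antitone (derSeq F L) := by
  refine antitone_nat_of_succ_le fun n => ?_
  induction n with
  | zero => exact le_top
  | succ n ih =>
    refine Submodule.span_mono ?_
    rintro _ ⟨a, ha, y, z, rfl⟩
    exact ⟨a, ih ha, y, z, rfl⟩

theorem derSeq_succ_lt (hnil : IsNilpotentLTS F L) {n : ℕ} (hn : derSeq F L n ≠ ⊥) :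
    derSeq F L (n + 1) < derSeq F L n := by
  refine (derSeq_antitone L n.le_succ).lt_of_ne fun hstab => hn ?_
  obtain ⟨m, hm⟩ := hnil
  have hconst : ∀ k, derSeq F L (n + k) = derSeq F L n := fun k => by
    induction k with
    | zero => rfl
    | succ k ih => rw [← add_assoc, derSeq, ih, ← derSeq, hstab]
  rw [← hconst m, eq_bot_iff, ← hm]
  exact derSeq_antitone L (Nat.le_add_left m n)

theorem derSeq_eq_bot_or_finrank_add_le [FiniteDimensional F T] (hnil : IsNilpotentLTS F L)
    (n : ℕ) : derSeq F L n = ⊥ ∨ Module.finrank F (derSeq F L n) + n ≤ Module.finrank F T := by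
  induction n with
  | zero => exact Or.inr (Submodule.finrank_le _)
  | succ n ih =>
    by_cases hn : derSeq F L n = ⊥
    · exact Or.inl (eq_bot_iff.mpr (hn ▸ derSeq_antitone L n.le_succ))
    · have := Submodule.finrank_lt_finrank_of_lt (derSeq_succ_lt L hnil hn)
      have := ih.resolve_left hn
      omega

theorem derSeq_eq_bot_of_finrank_le [FiniteDimensional F T] (hnil : IsNilpotentLTS F L)
    {n : ℕ} (hn : Module.finrank F T ≤ n) : derSeq F L n = ⊥ := by
  refine (derSeq_eq_bot_or_finrank_add_le L hnil n).elim id fun h => ?_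
  exact Submodule.finrank_eq_zero.mp (by omega)

end LowerCentralSeries

theorem stmt12 {F : Type*} [Field F] (h2 : (2 : F) ≠ 0)
    {T : Type*} [AddCommGroup T] [Module F T] [FiniteDimensional F T]
    (hd : Module.finrank F T ≤ 2) (L : LTS F T) (hnil : IsNilpotentLTS F L) :
    ∀ x y z, L.br x y z = 0 := by
  have hann : ∀ a ∈ derSeq F L 1, ∀ y z, L.br a y z = 0 :=
    (derSeq_succ_eq_bot_iff L 1).mp (derSeq_eq_bot_of_finrank_le L hnil hd)
  by_cases hD : derSeq F L 1 = ⊥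
  · exact fun x => (derSeq_succ_eq_bot_iff L 0).mp hD x Submodule.mem_top
  · have hcodim : Module.finrank F (T ⧸ derSeq F L 1) ≤ 1 := by
      have := (derSeq F L 1).finrank_quotient_add_finrank
      have := Submodule.one_le_finrank_iff.mpr hD
      omega
    obtain ⟨v, hv⟩ :=
      (derSeq F L 1).exists_span_singleton_sup_eq_top_of_finrank_quotient_le_one hcodim
    exact L.br_eq_zero_of_span_sup_eq_top h2 hann hv
end

section
/- For each λ in an algebraically closed field F of characteristic ≠ 2,3, the 4-dimensional space with basis e₁,e₂,e₃,e₄ and products [e₁,e₂,e₃] = −(λ+1)e₄, [e₂,e₃,e₁] = λe₄, [e₃,e₁,e₂] = e₄ (together with the products forced by skew-symmetry in the first two arguments, all other basic products zero) is a nilpotent Lie triple system T_{4,6}^λ; moreover, for λ with λ²+λ ≠ 0, the map ξ(λ) = (λ²+λ+1)³ / (λ²(λ+1)²) satisfies: T_{4,6}^α ≅ T_{4,6}^β if and only if ξ(α) = ξ(β). -/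
/-- The bracket of the family `T₄,₆^λ` on `F⁴`:
`[e₁,e₂,e₃] = -(λ+1)e₄`, `[e₂,e₃,e₁] = λe₄`, `[e₃,e₁,e₂] = e₄`,
extended trilinearly with the skew-symmetries forced by (A1). -/
def brFam (F : Type*) [Field F] (l : F) :
    (Fin 4 → F) → (Fin 4 → F) → (Fin 4 → F) → (Fin 4 → F) :=
  fun x y z =>
    ((-(l + 1)) * (x 0 * y 1 - x 1 * y 0) * z 2
      + l * (x 1 * y 2 - x 2 * y 1) * z 0
      + (x 2 * y 0 - x 0 * y 2) * z 1) • (fun i => if i = 3 then (1 : F) else 0)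

/-!
The bracket of `T₄,₆^λ` is `[x, y, z] = ((x × y) ⬝ M_λ z) e₄`, where `x × y` is the cross product
of the first three coordinates, `M_λ = diag(λ, 1, -(λ+1))` and `e₄ = Pi.single 3 1`. Brackets land
in `F e₄`, which annihilates everything, so the system is nilpotent of class two.

Being a bracket, `e₄` is mapped by an isomorphism `T^α ≅ T^β` to some `c e₄` with `c ≠ 0`, so the
upper left `3 × 3` block `P` of the isomorphism satisfies `(P x × P y) ⬝ M_β P z = c (x × y) ⬝ M_α z`.
Since `P x × P y = adj(P)ᵀ (x × y)`, this says `adj(P) M_β P = c M_α`. Comparing determinants and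
traces of adjugates gives `c³ det M_α = (det P)³ det M_β` and `c² tr adj M_α = (det P)² tr adj M_β`,
and `ξ = (-tr adj M)³ / (det M)²` is invariant under such rescalings.

Conversely `ξ(α) = ξ(β)` factors into six linear-fractional relations between `α` and `β`, i.e.
`β` lies in the orbit of `α` under `λ ↦ λ⁻¹` and `λ ↦ -1-λ`; both are realised by permuting
`e₁, e₂, e₃` and rescaling `e₄`.
-/

open Matrix

namespace LTS

variable {F T : Type*} [Field F] [AddCommGroup T] [Module F T]

theorem ext_of_br {L L' : LTS F T} (h : L.br = L'.br) : L = L' := by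
  cases L; cases L'; cases h; rfl

def annihilator (L : LTS F T) : Submodule F T where
  carrier := AnnSet F L
  add_mem' {a b} ha hb y z := by rw [L.add₁, ha y z, hb y z, add_zero]
  zero_mem' y z := by simpa using L.smul₁ 0 0 y z
  smul_mem' c a ha y z := by rw [L.smul₁, ha y z, smul_zero]

theorem derSeq_two_eq_bot (L : LTS F T) (h : ∀ x y z, L.br x y z ∈ AnnSet F L) :
    derSeq F L 2 = ⊥ := by
  have h₁ : derSeq F L 1 ≤ L.annihilator := by
    rw [derSeq, Submodule.span_le]
    rintro _ ⟨a, -, y, z, rfl⟩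
    exact h a y z
  rw [derSeq, eq_bot_iff, Submodule.span_le]
  rintro _ ⟨a, ha, y, z, rfl⟩
  exact h₁ ha y z

end LTS

section Iso

variable {F T₁ T₂ T₃ : Type*} [Field F] [AddCommGroup T₁] [Module F T₁]
  [AddCommGroup T₂] [Module F T₂] [AddCommGroup T₃] [Module F T₃]

theorem LTSIso.refl (L : LTS F T₁) : LTSIso F L L :=
  ⟨LinearEquiv.refl F T₁, fun _ _ _ => rfl⟩

theorem LTSIso.trans {L₁ : LTS F T₁} {L₂ : LTS F T₂} {L₃ : LTS F T₃}
    (h₁₂ : LTSIso F L₁ L₂) (h₂₃ : LTSIso F L₂ L₃) : LTSIso F L₁ L₃ := by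
  obtain ⟨e, he⟩ := h₁₂
  obtain ⟨f, hf⟩ := h₂₃
  exact ⟨e.trans f, fun x y z => by simp [he, hf]⟩

end Iso

section CrossProduct

variable {R : Type*} [CommRing R]

theorem cross_mulVec_mulVec (P : Matrix (Fin 3) (Fin 3) R) (x y : Fin 3 → R) :
    (P *ᵥ x) ⨯₃ (P *ᵥ y) = (adjugate P)ᵀ *ᵥ (x ⨯₃ y) := by
  ext i
  fin_cases i <;>
    simp [cross_apply, adjugate_fin_three, mulVec, dotProduct, Fin.sum_univ_three] <;> ring

theorem exists_cross_eq_single (i : Fin 3) : ∃ x y : Fin 3 → R, x ⨯₃ y = Pi.single i 1 := by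
  fin_cases i
  exacts [⟨Pi.single 1 1, Pi.single 2 1, by ext j; fin_cases j <;> simp [cross_apply]⟩,
    ⟨Pi.single 2 1, Pi.single 0 1, by ext j; fin_cases j <;> simp [cross_apply]⟩,
    ⟨Pi.single 0 1, Pi.single 1 1, by ext j; fin_cases j <;> simp [cross_apply]⟩]

theorem eq_of_cross_dotProduct_mulVec {N N' : Matrix (Fin 3) (Fin 3) R}
    (h : ∀ x y z, (x ⨯₃ y) ⬝ᵥ (N *ᵥ z) = (x ⨯₃ y) ⬝ᵥ (N' *ᵥ z)) : N = N' := by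
  ext i j
  obtain ⟨x, y, hxy⟩ := exists_cross_eq_single (R := R) i
  simpa [hxy, mulVec_single_one] using h x y (Pi.single j 1)

theorem adjugate_mul_mul_eq_of_cross_dotProduct {P M N : Matrix (Fin 3) (Fin 3) R}
    (h : ∀ x y z, ((P *ᵥ x) ⨯₃ (P *ᵥ y)) ⬝ᵥ (M *ᵥ (P *ᵥ z)) = (x ⨯₃ y) ⬝ᵥ (N *ᵥ z)) :
    adjugate P * M * P = N := by
  refine eq_of_cross_dotProduct_mulVec fun x y z => ?_
  rw [← h, cross_mulVec_mulVec, mulVec_transpose, ← dotProduct_mulVec, mulVec_mulVec,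
    mulVec_mulVec, Matrix.mul_assoc]

theorem det_eq_of_adjugate_mul_mul_eq {P M N : Matrix (Fin 3) (Fin 3) R}
    (h : adjugate P * M * P = N) : det N = det P ^ 3 * det M := by
  rw [← h, det_mul, det_mul, det_adjugate, Fintype.card_fin]
  ring

theorem trace_adjugate_eq_of_adjugate_mul_mul_eq {P M N : Matrix (Fin 3) (Fin 3) R}
    (h : adjugate P * M * P = N) : trace (adjugate N) = det P ^ 2 * trace (adjugate M) := by
  rw [← h, adjugate_mul_distrib, adjugate_mul_distrib, adjugate_adjugate _ (by simp)]
  simp only [Fintype.card_fin, Nat.reduceSub, pow_one, Matrix.mul_smul, trace_smul, smul_eq_mul]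
  rw [trace_mul_comm, Matrix.mul_assoc, mul_adjugate, Matrix.mul_smul, Matrix.mul_one, trace_smul,
    smul_eq_mul]
  ring

end CrossProduct

section InitBlock

variable {R : Type*} [CommRing R] {n : ℕ}

def initBlock (f : (Fin (n + 1) → R) →ₗ[R] (Fin (n + 1) → R)) : Matrix (Fin n) (Fin n) R :=
  (LinearMap.toMatrix' f).submatrix Fin.castSucc Fin.castSucc

theorem init_map_eq_mulVec {f : (Fin (n + 1) → R) →ₗ[R] (Fin (n + 1) → R)}
    (hf : ∀ i : Fin n, f (Pi.single (Fin.last n) 1) i.castSucc = 0) (x : Fin (n + 1) → R) :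
    Fin.init (f x) = initBlock f *ᵥ Fin.init x := by
  have hx : f x = LinearMap.toMatrix' f *ᵥ x := by simp
  ext i
  simp [hx, Fin.init, mulVec, dotProduct, Fin.sum_univ_castSucc, initBlock, hf]

end InitBlock

section Family

variable {F : Type*} [Field F]

def monomialEquiv {ι : Type*} (σ : Equiv.Perm ι) (d : ι → F) (hd : ∀ i, d i ≠ 0) :
    (ι → F) ≃ₗ[F] (ι → F) :=
  (LinearEquiv.funCongrLeft F F σ).trans
    (LinearEquiv.piCongrRight fun i => LinearEquiv.smulOfNeZero F F (d i) (hd i))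

theorem monomialEquiv_apply {ι : Type*} (σ : Equiv.Perm ι) (d : ι → F) (hd : ∀ i, d i ≠ 0)
    (x : ι → F) (i : ι) : monomialEquiv σ d hd x i = d i * x (σ i) := rfl

theorem div_eq_div_of_scaling {a b u v c d : F} (hc : c ≠ 0) (hd : d ≠ 0)
    (hab : c ^ 2 * a = d ^ 2 * b) (huv : c ^ 3 * u = d ^ 3 * v) :
    a ^ 3 / u ^ 2 = b ^ 3 / v ^ 2 := by
  calc a ^ 3 / u ^ 2 = (c ^ 2 * a) ^ 3 / (c ^ 3 * u) ^ 2 := by field_simp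
    _ = (d ^ 2 * b) ^ 3 / (d ^ 3 * v) ^ 2 := by rw [hab, huv]
    _ = b ^ 3 / v ^ 2 := by field_simp

def lts46 (l : F) : LTS F (Fin 4 → F) where
  br := brFam F l
  add₁ _ _ _ _ := by funext i; by_cases hi : i = 3 <;> simp [brFam, hi]; ring
  smul₁ _ _ _ _ := by funext i; by_cases hi : i = 3 <;> simp [brFam, hi]; ring
  add₂ _ _ _ _ := by funext i; by_cases hi : i = 3 <;> simp [brFam, hi]; ring
  smul₂ _ _ _ _ := by funext i; by_cases hi : i = 3 <;> simp [brFam, hi]; ring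
  add₃ _ _ _ _ := by funext i; by_cases hi : i = 3 <;> simp [brFam, hi]; ring
  smul₃ _ _ _ _ := by funext i; by_cases hi : i = 3 <;> simp [brFam, hi]; ring
  A1 _ _ _ := by funext i; by_cases hi : i = 3 <;> simp [brFam, hi]; ring
  A2 _ _ _ := by funext i; by_cases hi : i = 3 <;> simp [brFam, hi]; ring
  A3 _ _ _ _ _ := by funext i; simp [brFam]

theorem lts46_isNilpotent (l : F) : IsNilpotentLTS F (lts46 l) :=
  ⟨2, LTS.derSeq_two_eq_bot _ fun x y z u v => by funext i; simp [lts46, brFam]⟩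

def diag46 (l : F) : Matrix (Fin 3) (Fin 3) F := diagonal ![l, 1, -(l + 1)]

theorem det_diag46 (l : F) : det (diag46 l) = -(l ^ 2 + l) := by
  simp only [diag46, det_diagonal, Fin.prod_univ_three, cons_val_zero, cons_val_one, cons_val]
  ring

theorem trace_adjugate_diag46 (l : F) : trace (adjugate (diag46 l)) = -(l ^ 2 + l + 1) := by
  rw [diag46, adjugate_fin_three, trace_fin_three]
  simp
  ring

def form46 (l : F) (x y z : Fin 4 → F) : F :=
  (Fin.init x ⨯₃ Fin.init y) ⬝ᵥ (diag46 l *ᵥ Fin.init z)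

theorem brFam_eq_smul (l : F) (x y z : Fin 4 → F) :
    brFam F l x y z = form46 l x y z • Pi.single 3 1 := by
  ext i
  simp [brFam, form46, diag46, cross_apply, Fin.init, Pi.single_apply, mulVec, dotProduct,
    Fin.sum_univ_three]
  split_ifs
  · ring
  · rfl

theorem brFam_single_two_zero_one (l : F) :
    brFam F l (Pi.single 2 1) (Pi.single 0 1) (Pi.single 1 1) = Pi.single 3 1 := by
  rw [brFam_eq_smul, form46]
  simp [diag46, Fin.init, cross_apply, mulVec, dotProduct, Fin.sum_univ_three]

section Isomorphism

variable {α β c : F} {e : (Fin 4 → F) ≃ₗ[F] (Fin 4 → F)}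
  (he : ∀ x y z, e (brFam F α x y z) = brFam F β (e x) (e y) (e z))
include he

theorem exists_map_single_three : ∃ c : F, c ≠ 0 ∧ e (Pi.single 3 1) = c • Pi.single 3 1 := by
  have h := he (Pi.single 2 1) (Pi.single 0 1) (Pi.single 1 1)
  rw [brFam_single_two_zero_one, brFam_eq_smul] at h
  refine ⟨_, fun hc => ?_, h⟩
  rw [hc, zero_smul, LinearEquiv.map_eq_zero_iff] at h
  simpa using congrFun h 3

variable (hc : e (Pi.single 3 1) = c • Pi.single 3 1)
include hc

theorem form46_map (x y z : Fin 4 → F) : form46 β (e x) (e y) (e z) = c * form46 α x y z := by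
  have h := he x y z
  rw [brFam_eq_smul, brFam_eq_smul, map_smul, hc, smul_smul] at h
  simpa [mul_comm] using (congrFun h 3).symm

theorem adjugate_initBlock_mul_diag46_mul :
    adjugate (initBlock e.toLinearMap) * diag46 β * initBlock e.toLinearMap = c • diag46 α := by
  have hlast (i : Fin 3) : e (Pi.single (Fin.last 3) 1) i.castSucc = 0 := by
    simp [show Fin.last 3 = 3 from rfl, hc, Fin.ext_iff, i.isLt.ne]
  have hinit (x : Fin 4 → F) : Fin.init (e x) = initBlock e.toLinearMap *ᵥ Fin.init x :=
    init_map_eq_mulVec hlast x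
  refine adjugate_mul_mul_eq_of_cross_dotProduct fun x y z => ?_
  have h := form46_map he hc (Fin.snoc x 0) (Fin.snoc y 0) (Fin.snoc z 0)
  rw [form46, form46, hinit, hinit, hinit] at h
  simp only [Fin.init_snoc] at h
  rw [h, smul_mulVec, dotProduct_smul, smul_eq_mul]

end Isomorphism

theorem xi_eq_of_ltsIso {α β : F} (hα : α ^ 2 + α ≠ 0) (h : LTSIso F (lts46 α) (lts46 β)) :
    (α ^ 2 + α + 1) ^ 3 / (α ^ 2 * (α + 1) ^ 2) = (β ^ 2 + β + 1) ^ 3 / (β ^ 2 * (β + 1) ^ 2) := by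
  obtain ⟨e, he⟩ := h
  obtain ⟨c, hc0, hc⟩ := exists_map_single_three he
  have hP := adjugate_initBlock_mul_diag46_mul he hc
  set d := det (initBlock e.toLinearMap)
  have hdet : c ^ 3 * (α ^ 2 + α) = d ^ 3 * (β ^ 2 + β) := by
    have h := det_eq_of_adjugate_mul_mul_eq hP
    rw [det_smul, det_diag46, det_diag46, Fintype.card_fin] at h
    linear_combination -h
  have htr : c ^ 2 * (α ^ 2 + α + 1) = d ^ 2 * (β ^ 2 + β + 1) := by
    have h := trace_adjugate_eq_of_adjugate_mul_mul_eq hP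
    rw [adjugate_smul, trace_smul, trace_adjugate_diag46, trace_adjugate_diag46,
      Fintype.card_fin, smul_eq_mul] at h
    linear_combination -h
  have hd : d ≠ 0 := by
    rintro hd
    rw [hd, zero_pow three_ne_zero, zero_mul] at hdet
    exact mul_ne_zero (pow_ne_zero 3 hc0) hα hdet
  rw [show α ^ 2 * (α + 1) ^ 2 = (α ^ 2 + α) ^ 2 by ring,
    show β ^ 2 * (β + 1) ^ 2 = (β ^ 2 + β) ^ 2 by ring]
  exact div_eq_div_of_scaling hc0 hd htr hdet

theorem ltsIso_lts46_neg_sub_one (α : F) : LTSIso F (lts46 α) (lts46 (-1 - α)) := by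
  refine ⟨monomialEquiv (Equiv.swap 0 2) ![1, 1, 1, -1] ?_, fun x y z => ?_⟩
  · intro i; fin_cases i <;> simp
  ext i
  fin_cases i <;> simp [lts46, brFam, monomialEquiv_apply, Equiv.swap_apply_of_ne_of_ne]
  ring

theorem ltsIso_lts46_inv {α : F} (hα : α ≠ 0) : LTSIso F (lts46 α) (lts46 α⁻¹) := by
  refine ⟨monomialEquiv (Equiv.swap 0 1) ![1, 1, 1, -α⁻¹] ?_, fun x y z => ?_⟩
  · intro i; fin_cases i <;> simp [hα]
  ext i
  fin_cases i <;> simp [lts46, brFam, monomialEquiv_apply, Equiv.swap_apply_of_ne_of_ne]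
  field_simp
  ring

theorem ltsIso_of_xi_eq {α β : F} (hα : α ^ 2 + α ≠ 0) (hβ : β ^ 2 + β ≠ 0)
    (h : (α ^ 2 + α + 1) ^ 3 / (α ^ 2 * (α + 1) ^ 2) = (β ^ 2 + β + 1) ^ 3 / (β ^ 2 * (β + 1) ^ 2)) :
    LTSIso F (lts46 α) (lts46 β) := by
  have hα₀ : α ≠ 0 := by rintro rfl; simp at hα
  have hα₁ : α + 1 ≠ 0 := fun h => hα (by linear_combination α * h)
  have hα₂ : -1 - α ≠ 0 := fun h => hα₁ (by linear_combination -h)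
  have hβ₀ : β ≠ 0 := by rintro rfl; simp at hβ
  have hβ₁ : β + 1 ≠ 0 := fun h => hβ (by linear_combination β * h)
  rw [div_eq_div_iff (mul_ne_zero (pow_ne_zero 2 hα₀) (pow_ne_zero 2 hα₁))
    (mul_ne_zero (pow_ne_zero 2 hβ₀) (pow_ne_zero 2 hβ₁))] at h
  have hprod : (β - α) * (α * β - 1) * (α + β + 1) * (α * β + β + 1) * (α * β + α + β)
      * (α * β + α + 1) = 0 := by
    linear_combination -h
  simp only [mul_eq_zero, sub_eq_zero] at hprod
  rcases hprod with (((((rfl | h) | h) | h) | h) | h)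
  · exact LTSIso.refl _
  · obtain rfl : β = α⁻¹ := eq_inv_of_mul_eq_one_right h
    exact ltsIso_lts46_inv hα₀
  · obtain rfl : β = -1 - α := by linear_combination h
    exact ltsIso_lts46_neg_sub_one α
  · obtain rfl : β = (-1 - α)⁻¹ := eq_inv_of_mul_eq_one_left (by linear_combination -h)
    exact (ltsIso_lts46_neg_sub_one α).trans (ltsIso_lts46_inv hα₂)
  · obtain rfl : β = -1 - (-1 - α)⁻¹ := by field_simp; linear_combination -h
    exact ((ltsIso_lts46_neg_sub_one α).trans (ltsIso_lts46_inv hα₂)).trans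
      (ltsIso_lts46_neg_sub_one _)
  · obtain rfl : β = -1 - α⁻¹ := by field_simp; linear_combination h
    exact (ltsIso_lts46_inv hα₀).trans (ltsIso_lts46_neg_sub_one _)

end Family

theorem stmt14_general {F : Type*} [Field F] :
    (∀ l : F, ∃ L : LTS F (Fin 4 → F), L.br = brFam F l ∧ IsNilpotentLTS F L) ∧
    (∀ α β : F, α ^ 2 + α ≠ 0 → β ^ 2 + β ≠ 0 →
      ∀ Lα Lβ : LTS F (Fin 4 → F), Lα.br = brFam F α → Lβ.br = brFam F β →
        (LTSIso F Lα Lβ ↔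
          (α ^ 2 + α + 1) ^ 3 / (α ^ 2 * (α + 1) ^ 2)
            = (β ^ 2 + β + 1) ^ 3 / (β ^ 2 * (β + 1) ^ 2))) := by
  refine ⟨fun l => ⟨lts46 l, rfl, lts46_isNilpotent l⟩, fun α β hα hβ Lα Lβ hLα hLβ => ?_⟩
  obtain rfl : Lα = lts46 α := LTS.ext_of_br hLα
  obtain rfl : Lβ = lts46 β := LTS.ext_of_br hLβ
  exact ⟨xi_eq_of_ltsIso hα, ltsIso_of_xi_eq hα hβ⟩

theorem stmt14 {F : Type*} [Field F] [IsAlgClosed F]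
    (h2 : (2 : F) ≠ 0) (h3 : (3 : F) ≠ 0) :
    (∀ l : F, ∃ L : LTS F (Fin 4 → F), L.br = brFam F l ∧ IsNilpotentLTS F L) ∧
    (∀ α β : F, α ^ 2 + α ≠ 0 → β ^ 2 + β ≠ 0 →
      ∀ Lα Lβ : LTS F (Fin 4 → F), Lα.br = brFam F α → Lβ.br = brFam F β →
        (LTSIso F Lα Lβ ↔
          (α ^ 2 + α + 1) ^ 3 / (α ^ 2 * (α + 1) ^ 2)
            = (β ^ 2 + β + 1) ^ 3 / (β ^ 2 * (β + 1) ^ 2))) :=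
  stmt14_general
end
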